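/- arXiv:2303.03479 — 6 statements merged into one kernel-verified Lean document; each statement's English description precedes it below -/
import Mathlib

section
/- Let G be a non-Hamiltonian graph on n ≥ 3 vertices possessing a Hamiltonian path v_1, v_2, …, v_n, and set x = v_1 and y = v_n. Then for every edge v_i v_j of G with 1 ≤ i < i+1 < j ≤ n: if v_{i+1} x is an edge of G then v_{j−1} y is not an edge of G, and if v_{i+1} y is an edge of G then v_{j−1} x is not an edge of G. -/
/-!
If both edges of either pair were present, the edge `v_i v_j` would close the Hamiltonian path
into a Hamiltonian cycle: walk `v_1, …, v_i`, jump to `v_j`, walk on to `v_n`, and return to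
`v_1` through the middle segment `v_{i+1}, …, v_{j-1}`, traversed backwards (first pair) or
forwards (second pair). Such a cycle is a list of indices that is a permutation of `1, …, n`;
its image under `v` is a Hamiltonian cycle because `v` is a bijection from `{1, …, n}`.
-/

open List Function

theorem List.isChain_range'_of_rel_succ {R : ℕ → ℕ → Prop} {a k : ℕ}
    (h : ∀ m, a ≤ m → m + 1 < a + k → R m (m + 1)) : (range' a k).IsChain R := by
  rw [isChain_iff_getElem]
  intro m hm
  simp only [length_range'] at hm
  simpa [getElem_range', add_assoc] using h (a + m) (by omega) (by omega)

namespace SimpleGraph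

variable {V : Type*} {G : SimpleGraph V} {n : ℕ} {v : ℕ → V}

theorem isChain_adj_range'_of_adj_succ
    (hpath : ∀ i, 1 ≤ i → i < n → G.Adj (v i) (v (i + 1))) {a k : ℕ} (ha : 1 ≤ a)
    (hk : a + k ≤ n + 1) : (range' a k).IsChain (G.Adj on v) :=
  isChain_range'_of_rel_succ fun m ham hmk => hpath m (by omega) (by omega)

variable [Fintype V] [DecidableEq V]

theorem isHamiltonian_of_isChain_adj {l : List V} (hne : l ≠ []) (hnodup : l.Nodup)
    (hmem : ∀ w, w ∈ l) (hlen : 3 ≤ l.length) (hchain : l.IsChain G.Adj)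
    (hclose : G.Adj (l.getLast hne) (l.head hne)) : G.IsHamiltonian := by
  intro _
  refine ⟨_, .cons hclose (Walk.ofSupport l hne hchain), ?_⟩
  rw [Walk.isHamiltonianCycle_iff_isCycle_and_support_count_tail_eq_one,
    Walk.isCycle_iff_isPath_tail_and_le_length]
  simp only [Walk.isPath_def, Walk.support_tail_of_not_nil _ Walk.not_nil_cons, Walk.length_cons,
    Walk.length_ofSupport, Walk.support_cons, tail_cons, Walk.support_ofSupport]
  exact ⟨⟨hnodup, by omega⟩, fun w => count_eq_one_of_mem hnodup (hmem w)⟩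

theorem isHamiltonian_of_perm_range' (hn : 3 ≤ n) (hinj : Set.InjOn v (Set.Icc 1 n))
    (hsurj : Set.SurjOn v (Set.Icc 1 n) Set.univ) {I : List ℕ} (hI : I ~ range' 1 n)
    (hchain : I.IsChain (G.Adj on v))
    (hclose : ∀ a ∈ I.getLast?, ∀ b ∈ I.head?, G.Adj (v a) (v b)) : G.IsHamiltonian := by
  have hmemI : ∀ m, m ∈ I ↔ m ∈ Set.Icc 1 n := fun m => by
    rw [hI.mem_iff, mem_range'_1, Set.mem_Icc]; omega
  have hlen : I.length = n := by simpa using hI.length_eq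
  have hne : I ≠ [] := by rintro rfl; simp only [length_nil] at hlen; omega
  refine isHamiltonian_of_isChain_adj (l := I.map v) (map_eq_nil_iff.not.mpr hne) ?_ ?_
    (by simpa [hlen]) ((isChain_map v).mpr hchain) ?_
  · exact (hI.nodup_iff.mpr nodup_range').map_on fun a ha b hb =>
      hinj ((hmemI a).1 ha) ((hmemI b).1 hb)
  · intro w
    obtain ⟨m, hm, rfl⟩ := hsurj (Set.mem_univ w)
    exact mem_map_of_mem ((hmemI m).2 hm)
  · simpa [getLast_map, head_map] using
      hclose _ (getLast?_eq_some_getLast hne) _ (head?_eq_some_head hne)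

theorem isHamiltonian_of_crossing (hn : 3 ≤ n) (hinj : Set.InjOn v (Set.Icc 1 n))
    (hsurj : Set.SurjOn v (Set.Icc 1 n) Set.univ)
    (hpath : ∀ i, 1 ≤ i → i < n → G.Adj (v i) (v (i + 1)))
    {i j : ℕ} (hi : 1 ≤ i) (hij : i + 1 < j) (hj : j ≤ n) (hadj : G.Adj (v i) (v j))
    {C : List ℕ} (hC : C ~ range' (i + 1) (j - i - 1)) (hCchain : C.IsChain (G.Adj on v))
    (hnC : ∀ c ∈ C.head?, G.Adj (v n) (v c)) (hC1 : ∀ c ∈ C.getLast?, G.Adj (v c) (v 1)) :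
    G.IsHamiltonian := by
  have hCne : C ≠ [] := by
    rintro rfl
    have := hC.length_eq
    simp only [length_nil, length_range'] at this
    omega
  refine isHamiltonian_of_perm_range' hn hinj hsurj
    (I := range' 1 i ++ range' j (n + 1 - j) ++ C) ?_ ?_ ?_
  · have hsplit : range' 1 n =
        range' 1 i ++ (range' (1 + i) (j - i - 1) ++ range' (1 + i + (j - i - 1)) (n + 1 - j)) := by
      rw [range'_append_1, range'_append_1]
      congr 1
      omega
    rw [hsplit, append_assoc, add_comm 1 i, show i + 1 + (j - i - 1) = j by omega]
    exact (perm_append_comm.trans (hC.append_right _)).append_left _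
  · refine (IsChain.append ?_ ?_ ?_).append hCchain ?_
    · exact isChain_adj_range'_of_adj_succ hpath le_rfl (by omega)
    · exact isChain_adj_range'_of_adj_succ hpath (by omega) (by omega)
    · simpa [getLast?_range', head?_range', show i ≠ 0 by omega, show n + 1 - j ≠ 0 by omega]
    · simpa [getLast?_range', show n + 1 - j ≠ 0 by omega, show j + (n + 1 - j) - 1 = n by omega]
  · simpa [head?_range', hCne, show i ≠ 0 by omega]

end SimpleGraph

/-- Let `G` be a non-Hamiltonian graph on `n ≥ 3` vertices possessing a Hamiltonian
path `v_1, v_2, …, v_n`, and set `x = v_1` and `y = v_n`. Then for every edge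
`v_i v_j` of `G` with `1 ≤ i < i+1 < j ≤ n`: if `v_{i+1} x` is an edge of `G` then
`v_{j-1} y` is not an edge of `G`, and if `v_{i+1} y` is an edge of `G` then
`v_{j-1} x` is not an edge of `G`. -/
theorem stmt_8 {V : Type*} [Fintype V] [DecidableEq V] {n : ℕ} (hn : 3 ≤ n)
    (G : SimpleGraph V) (hham : ¬ G.IsHamiltonian)
    (v : ℕ → V)
    (hinj : ∀ i j, 1 ≤ i → i ≤ n → 1 ≤ j → j ≤ n → v i = v j → i = j)
    (hsurj : ∀ w : V, ∃ i, 1 ≤ i ∧ i ≤ n ∧ v i = w)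
    (hpath : ∀ i, 1 ≤ i → i < n → G.Adj (v i) (v (i + 1))) :
    ∀ i j, 1 ≤ i → i + 1 < j → j ≤ n → G.Adj (v i) (v j) →
      (G.Adj (v (i + 1)) (v 1) → ¬ G.Adj (v (j - 1)) (v n)) ∧
      (G.Adj (v (i + 1)) (v n) → ¬ G.Adj (v (j - 1)) (v 1)) := by
  intro i j hi hij hj hadj
  have hinj' : Set.InjOn v (Set.Icc 1 n) := fun a ha b hb => hinj a b ha.1 ha.2 hb.1 hb.2
  have hsurj' : Set.SurjOn v (Set.Icc 1 n) Set.univ := fun w _ => by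
    obtain ⟨m, h1, h2, rfl⟩ := hsurj w
    exact ⟨m, ⟨h1, h2⟩, rfl⟩
  have hcross := fun C =>
    SimpleGraph.isHamiltonian_of_crossing (C := C) hn hinj' hsurj' hpath hi hij hj hadj
  have hmiddle : (range' (i + 1) (j - i - 1)).IsChain (G.Adj on v) :=
    SimpleGraph.isChain_adj_range'_of_adj_succ hpath (by omega) (by omega)
  have hhead : (range' (i + 1) (j - i - 1)).head? = some (i + 1) := by
    simp [head?_range', show j - i - 1 ≠ 0 by omega]
  have hlast : (range' (i + 1) (j - i - 1)).getLast? = some (j - 1) := by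
    simp [getLast?_range', show j - i - 1 ≠ 0 by omega,
      show i + 1 + (j - i - 1) - 1 = j - 1 by omega]
  constructor
  · intro hx hy
    have hmiddle_rev := isChain_reverse.mpr (hmiddle.imp fun _ _ h => h.symm)
    exact hham (hcross _ (reverse_perm _) hmiddle_rev (by simpa [hlast] using hy.symm)
      (by simpa [hhead] using hx))
  · intro hy hx
    exact hham (hcross _ (Perm.refl _) hmiddle (by simpa [hhead] using hy.symm)
      (by simpa [hlast] using hx))
end

section
/- Let G be a non-Hamiltonian graph on n ≥ 3 vertices possessing a Hamiltonian path v_1, v_2, …, v_n, and set x = v_1 and y = v_n. Then for every edge v_i v_j of G with 1 ≤ i < j ≤ n: if v_{i+1} y is an edge of G then v_{j+1} x is not an edge of G, and if v_{i−1} y is an edge of G then v_{j−1} x is not an edge of G. -/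
/-!
In the first configuration, reversing the blocks `v (i + 1), …, v j` and `v (j + 1), …, v n` of the
path yields a path from `v 1` to `v (j + 1)`, closed by the edge `v (j + 1) v 1` into a Hamiltonian
cycle. The second configuration is the first one for the reversed path `v n, …, v 1`.
-/

lemma Fin.eq_succ_or_wrap_of_val_sub_eq_one {n : ℕ} {a b : Fin n} (h : (a - b).val = 1) :
    b.val + 1 = a.val ∨ (a.val = 0 ∧ b.val + 1 = n) := by
  rcases le_or_gt b a with hba | hab
  · rw [Fin.coe_sub_iff_le.mpr hba] at h
    omega
  · rw [Fin.coe_sub_iff_lt.mpr hab] at h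
    omega

namespace SimpleGraph

variable {V : Type*} {G : SimpleGraph V}

lemma isHamiltonian_of_surjective_copy [Fintype V] [DecidableEq V] {n : ℕ} (hn : 3 ≤ n)
    (f : Copy (cycleGraph n) G) (hf : Function.Surjective f) : G.IsHamiltonian := by
  intro _
  obtain ⟨a, p, hp, hlen⟩ := (cycleGraph_isContained_iff (by omega)).mp ⟨f⟩
  have hcard : n = Fintype.card V := by
    simpa using Fintype.card_of_bijective ⟨f.injective, hf⟩
  exact ⟨a, p, Walk.isHamiltonianCycle_iff_isCycle_and_length_eq.mpr ⟨hp, hlen.trans hcard⟩⟩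

/-- `v 1, …, v n` is a Hamiltonian path of `G`. -/
structure IsHamiltonianPathSeq (G : SimpleGraph V) (n : ℕ) (v : ℕ → V) : Prop where
  injOn : Set.InjOn v (Set.Icc 1 n)
  surjOn : Set.SurjOn v (Set.Icc 1 n) Set.univ
  adj_succ : ∀ i, 1 ≤ i → i < n → G.Adj (v i) (v (i + 1))

namespace IsHamiltonianPathSeq

variable {n : ℕ} {v : ℕ → V}

lemma adj_of_succ_eq (h : G.IsHamiltonianPathSeq n v) {a b : ℕ} (ha : 1 ≤ a) (hb : 1 ≤ b)
    (han : a ≤ n) (hbn : b ≤ n) (hab : a + 1 = b ∨ b + 1 = a) : G.Adj (v a) (v b) := by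
  rcases hab with rfl | rfl
  · exact h.adj_succ a ha (by omega)
  · exact (h.adj_succ b hb (by omega)).symm

lemma isHamiltonian_of_adj_last_first [Fintype V] [DecidableEq V]
    (h : G.IsHamiltonianPathSeq n v) (hn : 3 ≤ n) (hclose : G.Adj (v n) (v 1)) :
    G.IsHamiltonian := by
  have adj : ∀ a b : Fin n, (a - b).val = 1 → G.Adj (v (a + 1)) (v (b + 1)) := by
    intro a b hab
    rcases Fin.eq_succ_or_wrap_of_val_sub_eq_one hab with hba | ⟨ha, hb⟩
    · exact h.adj_of_succ_eq (by omega) (by omega) (by omega) (by omega) (by omega)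
    · rw [ha, hb]
      exact hclose.symm
  let f : cycleGraph n →g G :=
    ⟨fun k ↦ v (k + 1), fun hab ↦ (cycleGraph_adj'.mp hab).elim (adj _ _) (adj _ _ · |>.symm)⟩
  refine isHamiltonian_of_surjective_copy hn ⟨f, fun a b hab ↦ ?_⟩ fun w ↦ ?_
  · have := h.injOn (by simp) (by simp) hab
    exact Fin.ext (by omega)
  · obtain ⟨k, ⟨hk1, hkn⟩, rfl⟩ := h.surjOn (Set.mem_univ w)
    exact ⟨⟨k - 1, by omega⟩, show v (k - 1 + 1) = v k by rw [Nat.sub_add_cancel hk1]⟩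

lemma comp (h : G.IsHamiltonianPathSeq n v) {τ : ℕ → ℕ}
    (hτ : Set.BijOn τ (Set.Icc 1 n) (Set.Icc 1 n))
    (hadj : ∀ p, 1 ≤ p → p < n → G.Adj (v (τ p)) (v (τ (p + 1)))) :
    G.IsHamiltonianPathSeq n (v ∘ τ) where
  injOn := h.injOn.comp hτ.injOn hτ.mapsTo
  surjOn := h.surjOn.comp hτ.surjOn
  adj_succ := hadj

lemma reverse (h : G.IsHamiltonianPathSeq n v) :
    G.IsHamiltonianPathSeq n (fun k ↦ v (n + 1 - k)) where
  injOn a ha b hb hab := by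
    have := h.injOn (by simp at ha ⊢; omega) (by simp at hb ⊢; omega) hab
    simp only [Set.mem_Icc] at ha hb
    omega
  surjOn w _ := by
    obtain ⟨k, ⟨hk1, hkn⟩, rfl⟩ := h.surjOn (Set.mem_univ w)
    exact ⟨n + 1 - k, by simp; omega, by simp only; congr; omega⟩
  adj_succ _ _ _ := h.adj_of_succ_eq (by omega) (by omega) (by omega) (by omega) (by omega)

end IsHamiltonianPathSeq

/-- Step `p` of the cycle `v 1, …, v i, v j, v (j - 1), …, v (i + 1), v n, v (n - 1), …, v (j + 1)`
visits `v (crossingCycleIndex i j n p)`. -/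
def crossingCycleIndex (i j n p : ℕ) : ℕ :=
  if p ≤ i then p else if p ≤ j then i + j + 1 - p else n + j + 1 - p

lemma crossingCycleIndex_bijOn {i j n : ℕ} (hij : i < j) (hjn : j ≤ n) :
    Set.BijOn (crossingCycleIndex i j n) (Set.Icc 1 n) (Set.Icc 1 n) := by
  have maps : Set.MapsTo (crossingCycleIndex i j n) (Set.Icc 1 n) (Set.Icc 1 n) := by
    intro p hp
    simp only [Set.mem_Icc, crossingCycleIndex] at hp ⊢
    split_ifs <;> omega
  refine Set.InvOn.bijOn ⟨?_, ?_⟩ maps maps <;>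
  · intro p hp
    simp only [Set.mem_Icc, crossingCycleIndex] at hp ⊢
    split_ifs <;> omega

theorem IsHamiltonianPathSeq.isHamiltonian_of_crossing [Fintype V] [DecidableEq V] {n : ℕ}
    {v : ℕ → V} (h : G.IsHamiltonianPathSeq n v) {i j : ℕ} (hi : 1 ≤ i) (hij : i < j)
    (hjn : j < n) (hadj : G.Adj (v i) (v j)) (hiy : G.Adj (v (i + 1)) (v n))
    (hjx : G.Adj (v (j + 1)) (v 1)) : G.IsHamiltonian := by
  set τ := crossingCycleIndex i j n with hτ
  have step : ∀ p, 1 ≤ p → p < n → G.Adj (v (τ p)) (v (τ (p + 1))) := by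
    intro p hp hpn
    rcases eq_or_ne p i with rfl | hpi
    · convert hadj using 2 <;> simp only [hτ, crossingCycleIndex] <;> split_ifs <;> omega
    rcases eq_or_ne p j with rfl | hpj
    · convert hiy using 2 <;> simp only [hτ, crossingCycleIndex] <;> split_ifs <;> omega
    refine h.adj_of_succ_eq ?_ ?_ ?_ ?_ ?_ <;> simp only [hτ, crossingCycleIndex] <;>
      split_ifs <;> omega
  refine (h.comp (crossingCycleIndex_bijOn hij hjn.le) step).isHamiltonian_of_adj_last_first
    (by omega) ?_
  show G.Adj (v (τ n)) (v (τ 1))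
  convert hjx using 2 <;> simp only [hτ, crossingCycleIndex] <;> split_ifs <;> omega

end SimpleGraph

theorem stmt_9_general {V : Type*} [Fintype V] [DecidableEq V] {n : ℕ}
    (G : SimpleGraph V) (hham : ¬ G.IsHamiltonian)
    (v : ℕ → V)
    (hinj : ∀ i j, 1 ≤ i → i ≤ n → 1 ≤ j → j ≤ n → v i = v j → i = j)
    (hsurj : ∀ w : V, ∃ i, 1 ≤ i ∧ i ≤ n ∧ v i = w)
    (hpath : ∀ i, 1 ≤ i → i < n → G.Adj (v i) (v (i + 1))) :
    ∀ i j, 1 ≤ i → i < j → j ≤ n → G.Adj (v i) (v j) →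
      (j < n → G.Adj (v (i + 1)) (v n) → ¬ G.Adj (v (j + 1)) (v 1)) ∧
      (2 ≤ i → G.Adj (v (i - 1)) (v n) → ¬ G.Adj (v (j - 1)) (v 1)) := by
  have h : G.IsHamiltonianPathSeq n v :=
    ⟨fun a ha b hb ↦ hinj a b ha.1 ha.2 hb.1 hb.2,
      fun w _ ↦ by obtain ⟨k, hk1, hkn, hk⟩ := hsurj w; exact ⟨k, ⟨hk1, hkn⟩, hk⟩, hpath⟩
  intro i j hi hij hjn hadj
  refine ⟨fun hjn' hiy hjx ↦ hham (h.isHamiltonian_of_crossing hi hij hjn' hadj hiy hjx),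
    fun hi2 hiy hjx ↦ hham ?_⟩
  refine h.reverse.isHamiltonian_of_crossing (i := n + 1 - j) (j := n + 1 - i)
    (by omega) (by omega) (by omega) ?_ ?_ ?_
  · convert hadj.symm using 2 <;> omega
  · convert hjx using 2 <;> omega
  · convert hiy using 2 <;> omega

/-- Let `G` be a non-Hamiltonian graph on `n ≥ 3` vertices possessing a Hamiltonian
path `v_1, v_2, …, v_n`, and set `x = v_1` and `y = v_n`. Then for every edge
`v_i v_j` of `G` with `1 ≤ i < j ≤ n`: if `v_{i+1} y` is an edge of `G` then
`v_{j+1} x` is not an edge of `G`, and if `v_{i-1} y` is an edge of `G` then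
`v_{j-1} x` is not an edge of `G` (the indices `j+1` and `i-1` being required to be
in range). -/
theorem stmt_9 {V : Type*} [Fintype V] [DecidableEq V] {n : ℕ} (hn : 3 ≤ n)
    (G : SimpleGraph V) (hham : ¬ G.IsHamiltonian)
    (v : ℕ → V)
    (hinj : ∀ i j, 1 ≤ i → i ≤ n → 1 ≤ j → j ≤ n → v i = v j → i = j)
    (hsurj : ∀ w : V, ∃ i, 1 ≤ i ∧ i ≤ n ∧ v i = w)
    (hpath : ∀ i, 1 ≤ i → i < n → G.Adj (v i) (v (i + 1))) :
    ∀ i j, 1 ≤ i → i < j → j ≤ n → G.Adj (v i) (v j) →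
      (j < n → G.Adj (v (i + 1)) (v n) → ¬ G.Adj (v (j + 1)) (v 1)) ∧
      (2 ≤ i → G.Adj (v (i - 1)) (v n) → ¬ G.Adj (v (j - 1)) (v 1)) :=
  stmt_9_general G hham v hinj hsurj hpath
end

section
/- Let G be a non-Hamiltonian graph on n ≥ 3 vertices possessing a Hamiltonian path v_1, v_2, …, v_n, and set x = v_1 and y = v_n. Then for all indices a < b such that v_a y and v_b x are edges of G, there exists an index s with a < s < b such that neither v_s x nor v_s y is an edge of G. Moreover, if such an index s is unique, then v_{s−1} y and v_{s+1} x are edges of G. -/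
/-!
Write `x = v_1`, `y = v_n`. If `v_i y` and `v_{i+1} x` were both edges, then
`v_1, …, v_i, v_n, v_{n-1}, …, v_{i+1}, v_1` would be a Hamiltonian cycle. So no index `i` has
`v_i` adjacent to `y` and `v_{i+1}` adjacent to `x`. Starting from `v_a ~ y`, adjacency to `y`
therefore propagates to the right as long as every vertex is adjacent to `x` or `y`, and
adjacency to `x` propagates to the left from `v_b ~ x`; the two propagations would meet in a
crossing unless some `v_s` between `v_a` and `v_b` is adjacent to neither, and if that `s` is
unique, they reach `v_{s-1}` and `v_{s+1}` respectively.
-/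

def CrossFree (X Y : ℕ → Prop) (a b : ℕ) : Prop :=
  ∀ t, a ≤ t → t < b → Y t → ¬ X (t + 1)

namespace CrossFree

variable {X Y : ℕ → Prop} {a b : ℕ}

theorem mono (h : CrossFree X Y a b) {a' b' : ℕ} (ha : a ≤ a') (hb : b' ≤ b) :
    CrossFree X Y a' b' :=
  fun t hat htb => h t (ha.trans hat) (htb.trans_le hb)

theorem forall_right_of_cover (h : CrossFree X Y a b) (hY : Y a) {c : ℕ} (hcb : c ≤ b)
    (hcover : ∀ t, a < t → t < c → X t ∨ Y t) : ∀ t, a ≤ t → t < c → Y t := by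
  intro t hat
  induction t, hat using Nat.le_induction with
  | base => exact fun _ => hY
  | succ t hat ih =>
    intro htc
    exact (hcover (t + 1) (by omega) htc).resolve_left (h t hat (by omega) (ih (by omega)))

theorem forall_left_of_cover (h : CrossFree X Y a b) (hX : X b) {c : ℕ} (hac : a ≤ c)
    (hcover : ∀ t, c < t → t < b → X t ∨ Y t) : ∀ t, c < t → t ≤ b → X t := by
  intro t hct htb
  induction htb using Nat.decreasingInduction with
  | self => exact hX
  | of_succ t htb ih =>
    exact (hcover t hct htb).resolve_right fun hY => h t (by omega) htb hY (ih (by omega))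

theorem exists_gap (h : CrossFree X Y a b) (hY : Y a) (hX : X b) (hab : a < b) :
    ∃ s, a < s ∧ s < b ∧ ¬ X s ∧ ¬ Y s := by
  by_contra! hcover
  have hYlast : Y (b - 1) :=
    h.forall_right_of_cover hY le_rfl (fun t hat htb => or_iff_not_imp_left.2 (hcover t hat htb))
      (b - 1) (by omega) (by omega)
  exact h (b - 1) (by omega) (by omega) hYlast (by rwa [Nat.sub_add_cancel (by omega)])

theorem of_unique_gap (h : CrossFree X Y a b) (hY : Y a) (hX : X b) {s : ℕ} (has : a < s)
    (hsb : s < b) (huniq : ∀ t, a < t → t < b → ¬ X t → ¬ Y t → t = s) :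
    Y (s - 1) ∧ X (s + 1) := by
  have hcover : ∀ t, a < t → t < b → t ≠ s → X t ∨ Y t := by
    intro t hat htb hts
    by_contra! hXY
    exact hts (huniq t hat htb hXY.1 hXY.2)
  exact ⟨h.forall_right_of_cover hY hsb.le (fun t hat hts => hcover t hat (by omega) (by omega))
      (s - 1) (by omega) (by omega),
    h.forall_left_of_cover hX has.le (fun t hst htb => hcover t (by omega) htb (by omega))
      (s + 1) (by omega) (by omega)⟩

end CrossFree

-- `v ∘ tailReversal n i` is `v_1, …, v_i, v_n, v_{n-1}, …, v_{i+1}`.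
def tailReversal (n i j : ℕ) : ℕ :=
  if j ≤ i then j else n + i + 1 - j

theorem bijOn_tailReversal (n i : ℕ) :
    Set.BijOn (tailReversal n i) (Set.Icc 1 n) (Set.Icc 1 n) := by
  have hmaps : Set.MapsTo (tailReversal n i) (Set.Icc 1 n) (Set.Icc 1 n) := by
    intro j ⟨hj1, hjn⟩
    simp only [tailReversal, Set.mem_Icc]
    split <;> omega
  have hinv : Set.InvOn (tailReversal n i) (tailReversal n i) (Set.Icc 1 n) (Set.Icc 1 n) := by
    refine ⟨fun j ⟨hj1, hjn⟩ => ?_, fun j ⟨hj1, hjn⟩ => ?_⟩ <;>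
      simp only [tailReversal] <;> split_ifs <;> omega
  exact hinv.bijOn hmaps hmaps

namespace SimpleGraph

variable {V : Type*} {G : SimpleGraph V}

theorem Walk.IsHamiltonian.isHamiltonianCycle_cons [DecidableEq V] {u v : V} {p : G.Walk u v}
    (hp : p.IsHamiltonian) (h : G.Adj v u) (hlen : 2 ≤ p.length) :
    (Walk.cons h p).IsHamiltonianCycle := by
  rw [Walk.isHamiltonianCycle_iff_isCycle_and_support_count_tail_eq_one, Walk.cons_isCycle_iff]
  refine ⟨⟨hp.isPath, fun he => ?_⟩, fun w => by simpa using hp w⟩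
  have := hp.isPath.length_eq_one_of_mem_edges (Sym2.eq_swap ▸ he)
  omega

structure IsHamiltonianSeq (G : SimpleGraph V) (v : ℕ → V) (n : ℕ) : Prop where
  bijOn : Set.BijOn v (Set.Icc 1 n) Set.univ
  adj : ∀ i, 1 ≤ i → i < n → G.Adj (v i) (v (i + 1))

namespace IsHamiltonianSeq

variable {v : ℕ → V} {n : ℕ}

theorem isHamiltonian [Fintype V] [DecidableEq V] (hv : G.IsHamiltonianSeq v n) (hn : 3 ≤ n)
    (hclose : G.Adj (v n) (v 1)) : G.IsHamiltonian := by
  set l := (List.range n).map fun j => v (j + 1)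
  have hne : l ≠ [] := by simp only [ne_eq, List.map_eq_nil_iff, List.range_eq_nil, l]; omega
  have hchain : l.IsChain G.Adj := List.isChain_iff_getElem.2 fun i hi => by
    simp only [l, List.length_map, List.length_range] at hi
    simpa [l] using hv.adj (i + 1) (by omega) (by omega)
  have hp : (Walk.ofSupport l hne hchain).IsHamiltonian := by
    intro w
    rw [Walk.support_ofSupport]
    refine List.count_eq_one_of_mem ?_ ?_
    · refine List.Nodup.map_on (fun i hi j hj hij => ?_) List.nodup_range
      simp only [List.mem_range] at hi hj
      have := hv.bijOn.injOn (Set.mem_Icc.2 ⟨by omega, by omega⟩)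
        (Set.mem_Icc.2 ⟨by omega, by omega⟩) hij
      omega
    · obtain ⟨i, ⟨hi1, hin⟩, rfl⟩ := hv.bijOn.surjOn (Set.mem_univ w)
      exact List.mem_map.2 ⟨i - 1, List.mem_range.2 (by omega), by rw [Nat.sub_add_cancel hi1]⟩
  have hlen : 2 ≤ (Walk.ofSupport l hne hchain).length := by
    simp only [Walk.length_ofSupport, List.length_map, List.length_range, l]; omega
  have hclose' : G.Adj (l.getLast hne) (l.head hne) := by
    simpa [l, List.getLast_range, Nat.sub_add_cancel (by omega : 1 ≤ n)] using hclose
  exact fun _ => ⟨_, _, hp.isHamiltonianCycle_cons hclose' hlen⟩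

theorem comp_tailReversal (hv : G.IsHamiltonianSeq v n) {i : ℕ} (hi : 1 ≤ i) (hin : i < n)
    (hadj : G.Adj (v i) (v n)) : G.IsHamiltonianSeq (v ∘ tailReversal n i) n where
  bijOn := hv.bijOn.comp (bijOn_tailReversal n i)
  adj j hj hjn := by
    simp only [Function.comp, tailReversal]
    rcases lt_trichotomy (j + 1) (i + 1) with hji | hji | hji
    · rw [if_pos (by omega), if_pos (by omega)]
      exact hv.adj j hj (by omega)
    · rw [if_pos (by omega), if_neg (by omega), show n + i + 1 - (j + 1) = n by omega]
      rwa [show j = i by omega]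
    · rw [if_neg (by omega), if_neg (by omega),
        show n + i + 1 - j = n + i + 1 - (j + 1) + 1 by omega]
      exact (hv.adj _ (by omega) (by omega)).symm

theorem crossFree [Fintype V] [DecidableEq V] (hv : G.IsHamiltonianSeq v n) (hn : 3 ≤ n)
    (hG : ¬ G.IsHamiltonian) :
    CrossFree (fun t => G.Adj (v t) (v 1)) (fun t => G.Adj (v t) (v n)) 1 n := by
  intro i hi hin hadj hcross
  refine hG ((hv.comp_tailReversal hi hin hadj).isHamiltonian hn ?_)
  simp only [Function.comp, tailReversal]
  rwa [if_neg (by omega), if_pos hi, show n + i + 1 - n = i + 1 by omega]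

end IsHamiltonianSeq

end SimpleGraph

/-- Let `G` be a non-Hamiltonian graph on `n ≥ 3` vertices possessing a Hamiltonian
path `v_1, v_2, …, v_n`, and set `x = v_1` and `y = v_n`. Then for all indices
`a < b` such that `v_a y` and `v_b x` are edges of `G`, there exists an index `s` with
`a < s < b` such that neither `v_s x` nor `v_s y` is an edge of `G`. Moreover, if such
an index `s` is unique, then `v_{s-1} y` and `v_{s+1} x` are edges of `G`. -/
theorem stmt_10 {V : Type*} [Fintype V] [DecidableEq V] {n : ℕ} (hn : 3 ≤ n)
    (G : SimpleGraph V) (hham : ¬ G.IsHamiltonian)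
    (v : ℕ → V)
    (hinj : ∀ i j, 1 ≤ i → i ≤ n → 1 ≤ j → j ≤ n → v i = v j → i = j)
    (hsurj : ∀ w : V, ∃ i, 1 ≤ i ∧ i ≤ n ∧ v i = w)
    (hpath : ∀ i, 1 ≤ i → i < n → G.Adj (v i) (v (i + 1))) :
    ∀ a b, 1 ≤ a → a < b → b ≤ n → G.Adj (v a) (v n) → G.Adj (v b) (v 1) →
      (∃ s, a < s ∧ s < b ∧ ¬ G.Adj (v s) (v 1) ∧ ¬ G.Adj (v s) (v n)) ∧
      (∀ s, a < s → s < b → ¬ G.Adj (v s) (v 1) → ¬ G.Adj (v s) (v n) →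
        (∀ s', a < s' → s' < b → ¬ G.Adj (v s') (v 1) → ¬ G.Adj (v s') (v n) → s' = s) →
        G.Adj (v (s - 1)) (v n) ∧ G.Adj (v (s + 1)) (v 1)) := by
  have hv : G.IsHamiltonianSeq v n :=
    ⟨⟨fun _ _ => trivial, fun i hi j hj => hinj i j hi.1 hi.2 hj.1 hj.2,
      fun w _ => (hsurj w).imp fun _ hi => ⟨⟨hi.1, hi.2.1⟩, hi.2.2⟩⟩, hpath⟩
  intro a b ha hab hbn hay hbx
  have hcross := (hv.crossFree hn hham).mono ha hbn
  exact ⟨hcross.exists_gap hay hbx hab,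
    fun s has hsb _ _ huniq => hcross.of_unique_gap hay hbx has hsb huniq⟩
end

section
/- Let G be a 2-tough non-Hamiltonian graph on n ≥ 3 vertices possessing a Hamiltonian path from x to y, where x and y are non-adjacent vertices with d(x) + d(y) = n − 1. Then |N(x) ∩ N(y)| ≥ 2. -/
open SimpleGraph

/-- A graph `G` is `t`-tough if for every set `S` of vertices such that `G - S` is
disconnected, `t * c(G - S) ≤ |S|`, where `c` counts connected components. -/
def Tough {V : Type*} [Fintype V] (t : ℝ) (G : SimpleGraph V) : Prop :=
  ∀ S : Finset V, ¬ (G.induce ((↑S : Set V)ᶜ)).Connected →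
    t * (Nat.card (G.induce ((↑S : Set V)ᶜ)).ConnectedComponent) ≤ S.card

/-!
Write `v₀ = x, v₁, …, vₗ = y` for the Hamiltonian path. Since `G` is not Hamiltonian, no Pósa
rotation closes it into a cycle, so `vᵢ ~ y` and `x ~ vᵢ₊₁` never hold together; as
`d(x) + d(y) = l`, exactly one of them holds for each `i < l`. If `x` and `y` had at most one
common neighbour, this would force `N(y) = {vᵣ, …, vₗ₋₁}` and `N(x) = {v₁, …, vᵣ}`. Two successive
rotations then rule out every edge between `{v₀, …, vᵣ₋₁}` and `{vᵣ₊₁, …, vₗ}`, so the single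
vertex `vᵣ` separates `G`, contradicting 2-toughness.
-/

open Finset

lemma SimpleGraph.Reachable.mem_of_forall_adj_mem {V : Type*} {G : SimpleGraph V} {A : Set V}
    (hA : ∀ ⦃a b⦄, G.Adj a b → a ∈ A → b ∈ A) {a b : V} (h : G.Reachable a b) (ha : a ∈ A) :
    b ∈ A := by
  rw [reachable_iff_reflTransGen] at h
  induction h with
  | refl => exact ha
  | tail _ hbc ih => exact hA hbc ih

lemma Tough.two_mul_le_card_of_not_preconnected {V : Type*} [Fintype V] {G : SimpleGraph V}
    {t : ℝ} (hG : Tough t G) (ht : 0 ≤ t) {S : Finset V}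
    (hS : ¬ (G.induce ((↑S : Set V)ᶜ)).Preconnected) : 2 * t ≤ S.card := by
  obtain ⟨a, b, hab⟩ : ∃ a b, ¬ (G.induce ((↑S : Set V)ᶜ)).Reachable a b := by
    simpa [Preconnected] using hS
  have : Nontrivial (G.induce ((↑S : Set V)ᶜ)).ConnectedComponent :=
    ⟨_, _, fun h => hab (ConnectedComponent.exact h)⟩
  calc 2 * t ≤ t * Nat.card (G.induce ((↑S : Set V)ᶜ)).ConnectedComponent := by
        rw [mul_comm]; gcongr; exact_mod_cast Finite.one_lt_card
    _ ≤ S.card := hG S fun h => hS h.preconnected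

namespace SimpleGraph.Walk

variable {V : Type*} {G : SimpleGraph V} {u v : V}

/-- The Pósa rotation of `p = v₀ ⋯ vₗ` along the edge `vᵢvₗ`: the path
`v₀ ⋯ vᵢ vₗ vₗ₋₁ ⋯ vᵢ₊₁`. -/
def posaRotate (p : G.Walk u v) (i : ℕ) (h : G.Adj (p.getVert i) v) :
    G.Walk u (p.getVert (i + 1)) :=
  (p.take i).append (cons h (p.drop (i + 1)).reverse)

lemma getVert_posaRotate (p : G.Walk u v) {i j : ℕ} (h : G.Adj (p.getVert i) v)
    (hi : i ≤ p.length) (hj : j ≤ i) : (p.posaRotate i h).getVert j = p.getVert j := by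
  simp [posaRotate, getVert_append', hi, hj]

lemma support_posaRotate_perm (p : G.Walk u v) {i : ℕ} (h : G.Adj (p.getVert i) v)
    (hi : i < p.length) : (p.posaRotate i h).support.Perm p.support := by
  have hsupp : (p.posaRotate i h).support
      = p.support.take (i + 1) ++ (p.support.drop (i + 1)).reverse := by
    simp [posaRotate, support_append, support_take, Nat.min_eq_left (Nat.succ_le_of_lt hi)]
  rw [hsupp]
  conv_rhs => rw [← p.support.take_append_drop (i + 1)]
  exact (List.reverse_perm _).append_left _

variable [DecidableEq V]

lemma IsHamiltonian.of_support_perm {u' v' : V} {p : G.Walk u v} {q : G.Walk u' v'}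
    (hp : p.IsHamiltonian) (h : q.support.Perm p.support) : q.IsHamiltonian :=
  fun a => (h.count_eq a).trans (hp a)

lemma IsHamiltonian.posaRotate {p : G.Walk u v} (hp : p.IsHamiltonian) {i : ℕ}
    (h : G.Adj (p.getVert i) v) (hi : i < p.length) : (p.posaRotate i h).IsHamiltonian :=
  hp.of_support_perm (p.support_posaRotate_perm h hi)

lemma IsHamiltonian.isHamiltonianCycle_cons_s11 {p : G.Walk u v} (hp : p.IsHamiltonian)
    (h : G.Adj v u) (hlen : 2 ≤ p.length) : (cons h p).IsHamiltonianCycle := by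
  rw [isHamiltonianCycle_isCycle_and_isHamiltonian_tail, isCycle_iff_isPath_tail_and_le_length]
  simp only [tail_cons, length_cons]
  exact ⟨⟨by simpa using hp.isPath, by omega⟩, fun a => by simpa using hp a⟩

lemma IsHamiltonian.not_preconnected_induce_compl_getVert {p : G.Walk u v}
    (hp : p.IsHamiltonian) {r : ℕ} (hr0 : 0 < r) (hrlen : r < p.length)
    (hcross : ∀ ⦃j k⦄, j < r → r < k → k ≤ p.length → ¬ G.Adj (p.getVert j) (p.getVert k)) :
    ¬ (G.induce (↑({p.getVert r} : Finset V) : Set V)ᶜ).Preconnected := by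
  have hinj {i j : ℕ} (hi : i ≤ p.length) (hj : j ≤ p.length) (h : p.getVert i = p.getVert j) :
      i = j := hp.isPath.getVert_injOn hi hj h
  have hmem {i : ℕ} (hi : i ≤ p.length) (hir : i ≠ r) :
      p.getVert i ∈ (↑({p.getVert r} : Finset V) : Set V)ᶜ := by
    simpa using fun h => hir (hinj hi hrlen.le h)
  let A : Set (↑(↑({p.getVert r} : Finset V) : Set V)ᶜ) := {z | ∃ j < r, z.1 = p.getVert j}
  have hA : ∀ ⦃a b⦄, (G.induce _).Adj a b → a ∈ A → b ∈ A := by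
    rintro a b hab ⟨j, hj, hja⟩
    obtain ⟨k, hkb, hkl⟩ := mem_support_iff_exists_getVert.1 (hp.mem_support b.1)
    have hkr : k ≠ r := fun h => b.2 (by simp [← hkb, h])
    refine ⟨k, ?_, hkb.symm⟩
    by_contra hrk
    exact hcross hj (by omega) hkl (by rw [← hja, hkb]; exact hab)
  intro hpre
  obtain ⟨j, hj, hjv⟩ := (hpre ⟨_, hmem (Nat.zero_le _) hr0.ne⟩
    ⟨_, hmem le_rfl hrlen.ne'⟩).mem_of_forall_adj_mem hA ⟨0, hr0, rfl⟩
  have := hinj le_rfl (by omega) hjv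
  omega

variable [Fintype V]

lemma IsHamiltonian.not_adj (hG : ¬ G.IsHamiltonian) (hV : 3 ≤ Fintype.card V)
    {p : G.Walk u v} (hp : p.IsHamiltonian) : ¬ G.Adj v u := fun h =>
  hG fun _ => ⟨v, cons h p, hp.isHamiltonianCycle_cons_s11 h (by rw [hp.length_eq]; omega)⟩

/-- Two Pósa rotations, first along `vₖvₗ` and then along the chord `vⱼvₖ₊₁`, produce a
Hamiltonian path from `v₀` to `vⱼ₊₁`. -/
lemma IsHamiltonian.not_adj_getVert_succ_of_chord (hG : ¬ G.IsHamiltonian)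
    (hV : 3 ≤ Fintype.card V) {p : G.Walk u v} (hp : p.IsHamiltonian) {j k : ℕ} (hjk : j < k)
    (hk : k < p.length) (hkv : G.Adj (p.getVert k) v)
    (hchord : G.Adj (p.getVert j) (p.getVert (k + 1))) : ¬ G.Adj u (p.getVert (j + 1)) := by
  set q := p.posaRotate k hkv
  have hq : q.IsHamiltonian := hp.posaRotate hkv hk
  have hqj : q.getVert j = p.getVert j := getVert_posaRotate p hkv hk.le hjk.le
  have hqj' : q.getVert (j + 1) = p.getVert (j + 1) := getVert_posaRotate p hkv hk.le hjk
  have hj : j < q.length := by rw [hq.length_eq, ← hp.length_eq]; omega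
  have := (hq.posaRotate (hqj ▸ hchord) hj).not_adj hG hV
  rw [hqj'] at this
  exact fun h => this h.symm

lemma IsHamiltonian.card_filter_getVert {p : G.Walk u v} (hp : p.IsHamiltonian) (P : V → Prop)
    [DecidablePred P] : #{i ∈ range (p.length + 1) | P (p.getVert i)} = #{a | P a} := by
  have hinj : Set.InjOn p.getVert ↑({i ∈ range (p.length + 1) | P (p.getVert i)}) :=
    hp.isPath.getVert_injOn.mono fun i hi => Nat.lt_succ_iff.1 (mem_range.1 (mem_filter.1 hi).1)
  rw [← card_image_of_injOn hinj]
  congr 1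
  ext a
  simp only [mem_image, mem_filter, mem_range, mem_univ, true_and]
  constructor
  · rintro ⟨i, ⟨-, hi⟩, rfl⟩
    exact hi
  · intro ha
    obtain ⟨i, rfl, hi⟩ := mem_support_iff_exists_getVert.1 (hp.mem_support a)
    exact ⟨i, ⟨by omega, ha⟩, rfl⟩

/-- Every `vᵢ₊₁` with `vᵢ₊₁ ~ vₗ` and `vᵢ ≁ vₗ` is a common neighbour of `v₀` and `vₗ`. -/
lemma IsHamiltonian.adj_getVert_end_of_le {p : G.Walk u v} (hp : p.IsHamiltonian)
    (hpart : ∀ i < p.length, G.Adj u (p.getVert (i + 1)) ↔ ¬ G.Adj (p.getVert i) v)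
    (hcommon : (G.neighborSet u ∩ G.neighborSet v).ncard ≤ 1) {r : ℕ} (hr0 : 0 < r)
    (hrlen : r < p.length) (hr : G.Adj (p.getVert r) v) (hmin : ∀ j < r, ¬ G.Adj (p.getVert j) v)
    {i : ℕ} (hri : r ≤ i) (hi : i < p.length) : G.Adj (p.getVert i) v := by
  have hcommon_at : ∀ k < p.length, G.Adj (p.getVert (k + 1)) v → ¬ G.Adj (p.getVert k) v →
      p.getVert (k + 1) ∈ G.neighborSet u ∩ G.neighborSet v :=
    fun k hk hvk1 hvk => ⟨(hpart k hk).2 hvk, hvk1.symm⟩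
  have hvr : p.getVert r ∈ G.neighborSet u ∩ G.neighborSet v := by
    obtain ⟨s, rfl⟩ := Nat.exists_eq_add_one.2 hr0
    exact hcommon_at s (by omega) hr (hmin s (by omega))
  refine Nat.decreasingInduction' (P := fun i => G.Adj (p.getVert i) v) (n := p.length - 1)
    (fun k hk hik hk1 => ?_) (by omega) (p.adj_penultimate (not_nil_iff_lt_length.2 (by omega)))
  by_contra hvk
  have := (Set.ncard_le_one_iff (Set.toFinite _)).1 hcommon (hcommon_at k (by omega) hk1 hvk) hvr
  have := hp.isPath.getVert_injOn (by omega : k + 1 ≤ p.length) hrlen.le this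
  omega

lemma IsHamiltonian.not_adj_getVert_of_lt_of_lt (hG : ¬ G.IsHamiltonian)
    (hV : 3 ≤ Fintype.card V) {p : G.Walk u v} (hp : p.IsHamiltonian)
    (hpart : ∀ i < p.length, G.Adj u (p.getVert (i + 1)) ↔ ¬ G.Adj (p.getVert i) v) {r : ℕ}
    (hmin : ∀ j < r, ¬ G.Adj (p.getVert j) v)
    (hint : ∀ ⦃i⦄, r ≤ i → i < p.length → G.Adj (p.getVert i) v) {j k : ℕ} (hj : j < r)
    (hk : r < k) (hkl : k ≤ p.length) : ¬ G.Adj (p.getVert j) (p.getVert k) := by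
  obtain ⟨k, rfl⟩ := Nat.exists_eq_add_one.2 (by omega : 0 < k)
  exact fun hchord => hp.not_adj_getVert_succ_of_chord hG hV (by omega) (by omega)
    (hint (by omega) (by omega)) hchord ((hpart j (by omega)).2 (hmin j hj))

variable [DecidableRel G.Adj]

lemma IsHamiltonian.degree_start {p : G.Walk u v} (hp : p.IsHamiltonian) :
    G.degree u = #{i ∈ range p.length | G.Adj u (p.getVert (i + 1))} := by
  rw [← card_neighborFinset_eq_degree, neighborFinset_eq_filter, ← hp.card_filter_getVert,
    range_add_one', filter_insert, if_neg (by simp), filter_map, card_map]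
  rfl

lemma IsHamiltonian.degree_end {p : G.Walk u v} (hp : p.IsHamiltonian) :
    G.degree v = #{i ∈ range p.length | G.Adj (p.getVert i) v} := by
  rw [← card_neighborFinset_eq_degree, neighborFinset_eq_filter, ← hp.card_filter_getVert,
    range_add_one, filter_insert]
  simp [adj_comm]

lemma IsHamiltonian.adj_start_iff_not_adj_end (hG : ¬ G.IsHamiltonian)
    (hV : 3 ≤ Fintype.card V) {p : G.Walk u v} (hp : p.IsHamiltonian)
    (hdeg : G.degree u + G.degree v = Fintype.card V - 1) {i : ℕ} (hi : i < p.length) :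
    G.Adj u (p.getVert (i + 1)) ↔ ¬ G.Adj (p.getVert i) v := by
  set A := {i ∈ range p.length | G.Adj u (p.getVert (i + 1))}
  set B := {i ∈ range p.length | G.Adj (p.getVert i) v}
  have hnot_both : ∀ i < p.length, G.Adj u (p.getVert (i + 1)) → ¬ G.Adj (p.getVert i) v :=
    fun i hi hA hB => (hp.posaRotate hB hi).not_adj hG hV hA.symm
  have hdisj : Disjoint A B := disjoint_filter.2 fun i hi => hnot_both i (mem_range.1 hi)
  have hunion : A ∪ B = range p.length :=
    eq_of_subset_of_card_le (union_subset (filter_subset _ _) (filter_subset _ _)) (by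
      rw [card_union_of_disjoint hdisj, ← hp.degree_start, ← hp.degree_end, hdeg, card_range,
        hp.length_eq])
  have hmem : i ∈ A ∪ B := hunion ▸ mem_range.2 hi
  refine ⟨hnot_both i hi, fun hB => ?_⟩
  simpa [A, B, hB, hi] using hmem

end SimpleGraph.Walk

theorem stmt_11_general {V : Type*} [Fintype V] [DecidableEq V]
    (hn : 3 ≤ Fintype.card V)
    (G : SimpleGraph V) [DecidableRel G.Adj]
    (htough : Tough 2 G) (hham : ¬ G.IsHamiltonian)
    (x y : V) (p : G.Walk x y) (hp : p.IsHamiltonian)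
    (hdeg : G.degree x + G.degree y = Fintype.card V - 1) :
    2 ≤ (G.neighborSet x ∩ G.neighborSet y).ncard := by
  have hpart := fun i (hi : i < p.length) => hp.adj_start_iff_not_adj_end hham hn hdeg hi
  by_contra! hcommon
  have hex : ∃ r, G.Adj (p.getVert r) y :=
    ⟨_, p.adj_penultimate (Walk.not_nil_iff_lt_length.2 (by rw [hp.length_eq]; omega))⟩
  set r := Nat.find hex
  have hr : G.Adj (p.getVert r) y := Nat.find_spec hex
  have hmin : ∀ j < r, ¬ G.Adj (p.getVert j) y := fun j => Nat.find_min hex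
  have hr0 : 0 < r := Nat.pos_of_ne_zero fun h => hp.not_adj hham hn (by simpa [h] using hr.symm)
  have hrlen : r < p.length := by
    by_contra! h
    simp [p.getVert_of_length_le h] at hr
  have hcut := hp.not_preconnected_induce_compl_getVert hr0 hrlen
    fun _ _ => hp.not_adj_getVert_of_lt_of_lt hham hn hpart hmin
      fun _ => hp.adj_getVert_end_of_le hpart (by omega) hr0 hrlen hr hmin
  have := htough.two_mul_le_card_of_not_preconnected zero_le_two hcut
  norm_num at this

/-- Let `G` be a 2-tough non-Hamiltonian graph on `n ≥ 3` vertices possessing a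
Hamiltonian path from `x` to `y`, where `x` and `y` are non-adjacent vertices with
`d(x) + d(y) = n - 1`. Then `|N(x) ∩ N(y)| ≥ 2`. -/
theorem stmt_11 {V : Type*} [Fintype V] [DecidableEq V]
    (hn : 3 ≤ Fintype.card V)
    (G : SimpleGraph V) [DecidableRel G.Adj]
    (htough : Tough 2 G) (hham : ¬ G.IsHamiltonian)
    (x y : V) (p : G.Walk x y) (hp : p.IsHamiltonian)
    (hxy : x ≠ y) (hnadj : ¬ G.Adj x y)
    (hdeg : G.degree x + G.degree y = Fintype.card V - 1) :
    2 ≤ (G.neighborSet x ∩ G.neighborSet y).ncard :=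
  stmt_11_general hn G htough hham x y p hp hdeg
end

section
/- Let G be a 2-tough non-Hamiltonian graph on n ≥ 3 vertices possessing a Hamiltonian path v_1, v_2, …, v_n with x = v_1 and y = v_n non-adjacent and d(x) + d(y) = n − 1. Let S be the set of vertices adjacent to neither x nor y. Then for every v_i ∈ S, both v_{i−1} y and v_{i+1} x are edges of G, and S is an independent set. -/
/-!
Write `x = v 1`, `y = v n`. If `x ∼ v (j + 1)`, reversing the initial segment `v 1 … v j` of the
path (a Pósa rotation) gives a Hamiltonian path from `v j` to `y`; so in a non-Hamiltonian graph
`x ∼ v (j + 1)` and `v j ∼ y` never hold together. The `d(x)` indices of the first kind and the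
`d(y)` indices of the second kind are then disjoint subsets of the `n - 1` indices `1 ≤ j < n`, and
`d(x) + d(y) = n - 1` forces every index to be of one of the two kinds; for `v i ∈ S` this yields
`v (i - 1) ∼ y` and `v (i + 1) ∼ x`. If two vertices `v i, v j ∈ S` with `i < j` were adjacent,
two rotations (along `x ∼ v (i + 1)`, then along `v i ∼ v j`) would produce the Hamiltonian path
`v (j - 1) … v (i + 1) v 1 … v i v j … v n`, closed into a Hamiltonian cycle by `v (j - 1) ∼ y`.
-/

open SimpleGraph

section PathSegment

variable {V : Type*}

/-- The list `[v a, v (a + 1), …, v b]`, empty when `b < a`. -/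
def pathSegment (v : ℕ → V) (a b : ℕ) : List V := (List.range' a (b + 1 - a)).map v

variable {v : ℕ → V} {a b c : ℕ}

theorem mem_pathSegment {w : V} : w ∈ pathSegment v a b ↔ ∃ i, a ≤ i ∧ i ≤ b ∧ v i = w := by
  simp only [pathSegment, List.mem_map, List.mem_range'_1]
  exact ⟨fun ⟨i, hi, h⟩ => ⟨i, hi.1, by omega, h⟩, fun ⟨i, hai, hib, h⟩ => ⟨i, ⟨hai, by omega⟩, h⟩⟩

theorem length_pathSegment : (pathSegment v a b).length = b + 1 - a := by
  simp [pathSegment]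

theorem head?_pathSegment (hab : a ≤ b) : (pathSegment v a b).head? = some (v a) := by
  simp [pathSegment, List.head?_range', show b + 1 - a ≠ 0 by omega]

theorem getLast?_pathSegment (hab : a ≤ b) : (pathSegment v a b).getLast? = some (v b) := by
  simp [pathSegment, List.getLast?_range', show b + 1 - a ≠ 0 by omega,
    show a + (b + 1 - a) - 1 = b by omega]

theorem pathSegment_append (hab : a ≤ b + 1) (hbc : b ≤ c) :
    pathSegment v a b ++ pathSegment v (b + 1) c = pathSegment v a c := by
  have h := List.range'_append_1 (s := a) (m := b + 1 - a) (n := c + 1 - (b + 1))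
  rw [show a + (b + 1 - a) = b + 1 by omega,
    show b + 1 - a + (c + 1 - (b + 1)) = c + 1 - a by omega] at h
  simp only [pathSegment, ← List.map_append, h]

end PathSegment

namespace SimpleGraph

variable {V : Type*} {G : SimpleGraph V}

structure IsHamiltonianPathList (G : SimpleGraph V) (l : List V) : Prop where
  isChain : l.IsChain G.Adj
  nodup : l.Nodup
  mem : ∀ w, w ∈ l

namespace IsHamiltonianPathList

variable {l : List V}

theorem length_eq_card [Fintype V] (h : G.IsHamiltonianPathList l) :
    l.length = Fintype.card V := by
  classical
  rw [← List.toFinset_card_of_nodup h.nodup, ← Finset.card_univ,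
    Finset.eq_univ_of_forall fun w => List.mem_toFinset.2 (h.mem w)]

theorem reverse_append {A B : List V} (h : G.IsHamiltonianPathList (A ++ B))
    (hAB : ∀ a ∈ A.head?, ∀ b ∈ B.head?, G.Adj a b) :
    G.IsHamiltonianPathList (A.reverse ++ B) := by
  have hperm : (A.reverse ++ B).Perm (A ++ B) := (List.reverse_perm A).append_right B
  obtain ⟨hA, hB, -⟩ := List.isChain_append.1 h.isChain
  refine ⟨List.IsChain.append ?_ hB ?_, hperm.nodup_iff.2 h.nodup,
    fun w => hperm.mem_iff.2 (h.mem w)⟩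
  · exact List.isChain_reverse.2 (hA.imp fun _ _ hab => hab.symm)
  · simpa [List.getLast?_reverse] using hAB

theorem isHamiltonian [Fintype V] [DecidableEq V] (h : G.IsHamiltonianPathList l)
    (hcard : 3 ≤ Fintype.card V) (hclose : ∀ a ∈ l.head?, ∀ b ∈ l.getLast?, G.Adj b a) :
    G.IsHamiltonian := by
  intro _
  have hne : l ≠ [] := List.ne_nil_of_length_pos (by rw [h.length_eq_card]; omega)
  let p := Walk.ofSupport l hne h.isChain
  have hadj : G.Adj (l.getLast hne) (l.head hne) :=
    hclose _ (List.head?_eq_some_head hne) _ (List.getLast?_eq_some_getLast hne)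
  refine ⟨_, Walk.cons hadj p, ?_⟩
  rw [Walk.isHamiltonianCycle_iff_isCycle_and_support_count_tail_eq_one,
    Walk.isCycle_iff_isPath_tail_and_le_length]
  refine ⟨⟨?_, ?_⟩, fun w => ?_⟩
  · simpa using Walk.IsPath.mk' (by simpa [p] using h.nodup)
  · rw [Walk.length_cons, Walk.length_ofSupport, h.length_eq_card]
    omega
  · simpa [p] using List.count_eq_one_of_mem h.nodup (h.mem w)

end IsHamiltonianPathList

theorem card_filter_adj_eq_degree [Fintype V] [DecidableRel G.Adj] {s : Finset ℕ} {f : ℕ → V}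
    {w : V} (hf : Set.InjOn f s) (hs : ∀ u, G.Adj w u → ∃ i ∈ s, f i = u) :
    (s.filter fun i => G.Adj w (f i)).card = G.degree w := by
  classical
  rw [← card_neighborFinset_eq_degree,
    ← Finset.card_image_of_injOn (hf.mono fun i hi => (Finset.mem_filter.1 hi).1)]
  congr 1
  ext u
  simp only [Finset.mem_image, Finset.mem_filter, mem_neighborFinset]
  constructor
  · rintro ⟨i, ⟨-, hi⟩, rfl⟩
    exact hi
  · intro hu
    obtain ⟨i, hi, rfl⟩ := hs u hu
    exact ⟨i, ⟨hi, hu⟩, rfl⟩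

variable {v : ℕ → V} {n : ℕ}

theorem isHamiltonianPathList_pathSegment
    (hinj : ∀ i j, 1 ≤ i → i ≤ n → 1 ≤ j → j ≤ n → v i = v j → i = j)
    (hsurj : ∀ w : V, ∃ i, 1 ≤ i ∧ i ≤ n ∧ v i = w)
    (hpath : ∀ i, 1 ≤ i → i < n → G.Adj (v i) (v (i + 1))) :
    G.IsHamiltonianPathList (pathSegment v 1 n) where
  isChain := (List.isChain_map v).2 <| (List.isChain_range' 1 _ 1).imp_of_mem_imp
    fun i j hi hj hij => by
      simp only [List.mem_range'_1] at hi hj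
      subst hij
      exact hpath i (by omega) (by omega)
  nodup := (List.nodup_range' 1).map_on fun i hi j hj => by
    simp only [List.mem_range'_1] at hi hj
    exact hinj i j (by omega) (by omega) (by omega) (by omega)
  mem w := mem_pathSegment.2 (hsurj w)

namespace IsHamiltonianPathList

variable (hP : G.IsHamiltonianPathList (pathSegment v 1 n))
include hP

theorem injOn_pathSegment : Set.InjOn v (Set.Icc 1 n) := by
  intro i hi j hj hij
  have hmem : ∀ k ∈ Set.Icc 1 n, k ∈ List.range' 1 (n + 1 - 1) := fun k hk => by
    simp only [Set.mem_Icc] at hk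
    exact List.mem_range'_1.2 ⟨hk.1, by omega⟩
  exact List.inj_on_of_nodup_map hP.nodup (hmem i hi) (hmem j hj) hij

theorem isHamiltonian_of_crossing [Fintype V] [DecidableEq V] (hcard : 3 ≤ Fintype.card V)
    {j : ℕ} (hj : 1 ≤ j) (hjn : j < n) (hx : G.Adj (v 1) (v (j + 1)))
    (hy : G.Adj (v j) (v n)) : G.IsHamiltonian := by
  rw [← pathSegment_append (b := j) (by omega) (by omega)] at hP
  refine (hP.reverse_append ?_).isHamiltonian hcard ?_
  · simpa [head?_pathSegment, hj, hjn] using hx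
  · simpa [head?_pathSegment, getLast?_pathSegment, hj, hjn] using hy.symm

theorem isHamiltonian_of_chord [Fintype V] [DecidableEq V] (hcard : 3 ≤ Fintype.card V)
    {i j : ℕ} (hi : 1 ≤ i) (hij : i + 1 < j) (hjn : j ≤ n) (hx : G.Adj (v 1) (v (i + 1)))
    (hchord : G.Adj (v i) (v j)) (hy : G.Adj (v (j - 1)) (v n)) : G.IsHamiltonian := by
  rw [← pathSegment_append (b := i) (by omega) (by omega),
    ← pathSegment_append (a := i + 1) (b := j - 1) (by omega) (by omega),
    Nat.sub_add_cancel (by omega : 1 ≤ j)] at hP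
  have hP₁ := hP.reverse_append (by
    simpa [head?_pathSegment, hi, Nat.le_sub_one_of_lt hij] using hx)
  rw [← List.append_assoc] at hP₁
  have hP₂ := hP₁.reverse_append (by
    simpa [head?_pathSegment, getLast?_pathSegment, hi, hjn] using hchord)
  refine hP₂.isHamiltonian hcard ?_
  simpa [head?_pathSegment, getLast?_pathSegment, hi, hjn, Nat.le_sub_one_of_lt hij]
    using hy.symm

theorem adj_or_adj_of_degree_add_degree [Fintype V] [DecidableEq V] [DecidableRel G.Adj]
    (hcard : 3 ≤ Fintype.card V) (hham : ¬ G.IsHamiltonian)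
    (hdeg : G.degree (v 1) + G.degree (v n) = n - 1) {j : ℕ} (hj : 1 ≤ j) (hjn : j < n) :
    G.Adj (v 1) (v (j + 1)) ∨ G.Adj (v n) (v j) := by
  set A := (Finset.Ico 1 n).filter fun j => G.Adj (v 1) (v (j + 1))
  set B := (Finset.Ico 1 n).filter fun j => G.Adj (v n) (v j)
  have hA : A.card = G.degree (v 1) := by
    refine card_filter_adj_eq_degree (fun k hk l hl hkl => ?_) fun u hu => ?_
    · simp only [Finset.coe_Ico, Set.mem_Ico] at hk hl
      have := hP.injOn_pathSegment ⟨by omega, by omega⟩ ⟨by omega, by omega⟩ hkl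
      omega
    · obtain ⟨i, hi, hin, rfl⟩ := mem_pathSegment.1 (hP.mem u)
      have : i ≠ 1 := by rintro rfl; exact G.irrefl hu
      exact ⟨i - 1, Finset.mem_Ico.2 ⟨by omega, by omega⟩, by rw [Nat.sub_add_cancel hi]⟩
  have hB : B.card = G.degree (v n) := by
    refine card_filter_adj_eq_degree (fun k hk l hl hkl => ?_) fun u hu => ?_
    · simp only [Finset.coe_Ico, Set.mem_Ico] at hk hl
      exact hP.injOn_pathSegment ⟨by omega, by omega⟩ ⟨by omega, by omega⟩ hkl
    · obtain ⟨i, hi, hin, rfl⟩ := mem_pathSegment.1 (hP.mem u)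
      have : i ≠ n := by rintro rfl; exact G.irrefl hu
      exact ⟨i, Finset.mem_Ico.2 ⟨hi, by omega⟩, rfl⟩
  have hdisj : Disjoint A B := by
    refine Finset.disjoint_filter.2 fun k hk hx hy => hham ?_
    rw [Finset.mem_Ico] at hk
    exact hP.isHamiltonian_of_crossing hcard hk.1 hk.2 hx hy.symm
  have hcover : A ∪ B = Finset.Ico 1 n :=
    Finset.eq_of_subset_of_card_le (Finset.union_subset (Finset.filter_subset _ _)
      (Finset.filter_subset _ _)) (by rw [Finset.card_union_of_disjoint hdisj, hA, hB, hdeg]; simp)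
  have hjAB : j ∈ A ∪ B := hcover ▸ Finset.mem_Ico.2 ⟨hj, hjn⟩
  simpa [A, B, hj, hjn] using hjAB

theorem adj_pred_and_adj_succ [Fintype V] [DecidableEq V] [DecidableRel G.Adj]
    (hcard : 3 ≤ Fintype.card V) (hham : ¬ G.IsHamiltonian)
    (hdeg : G.degree (v 1) + G.degree (v n) = n - 1) {i : ℕ} (hi : 1 < i) (hin : i < n)
    (hx : ¬ G.Adj (v i) (v 1)) (hy : ¬ G.Adj (v i) (v n)) :
    G.Adj (v (i - 1)) (v n) ∧ G.Adj (v (i + 1)) (v 1) := by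
  have hpred := hP.adj_or_adj_of_degree_add_degree hcard hham hdeg (j := i - 1) (by omega)
    (by omega)
  rw [Nat.sub_add_cancel hi.le] at hpred
  exact ⟨(hpred.resolve_left fun h => hx h.symm).symm,
    ((hP.adj_or_adj_of_degree_add_degree hcard hham hdeg hi.le hin).resolve_right
      fun h => hy h.symm).symm⟩

end IsHamiltonianPathList

end SimpleGraph

theorem stmt_12_general {V : Type*} [Fintype V] [DecidableEq V] {n : ℕ} (hn : 3 ≤ n)
    (G : SimpleGraph V) [DecidableRel G.Adj]
    (hham : ¬ G.IsHamiltonian)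
    (v : ℕ → V)
    (hinj : ∀ i j, 1 ≤ i → i ≤ n → 1 ≤ j → j ≤ n → v i = v j → i = j)
    (hsurj : ∀ w : V, ∃ i, 1 ≤ i ∧ i ≤ n ∧ v i = w)
    (hpath : ∀ i, 1 ≤ i → i < n → G.Adj (v i) (v (i + 1)))
    (hdeg : G.degree (v 1) + G.degree (v n) = n - 1)
    (S : Set V)
    (hS : S = {w | w ≠ v 1 ∧ w ≠ v n ∧ ¬ G.Adj w (v 1) ∧ ¬ G.Adj w (v n)}) :
    (∀ i, 1 ≤ i → i ≤ n → v i ∈ S →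
      G.Adj (v (i - 1)) (v n) ∧ G.Adj (v (i + 1)) (v 1)) ∧
    S.Pairwise (fun a b => ¬ G.Adj a b) := by
  have hP := isHamiltonianPathList_pathSegment hinj hsurj hpath
  have hcard : 3 ≤ Fintype.card V := by
    rwa [← hP.length_eq_card, length_pathSegment, Nat.add_sub_cancel]
  have hneighbours : ∀ i, 1 ≤ i → i ≤ n → v i ∈ S →
      G.Adj (v (i - 1)) (v n) ∧ G.Adj (v (i + 1)) (v 1) := by
    intro i hi hin hiS
    rw [hS] at hiS
    obtain ⟨hi1, hin', hx, hy⟩ := hiS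
    exact hP.adj_pred_and_adj_succ hcard hham hdeg (lt_of_le_of_ne hi fun h => hi1 (h ▸ rfl))
      (lt_of_le_of_ne hin fun h => hin' (h ▸ rfl)) hx hy
  refine ⟨hneighbours, ?_⟩
  rintro a ha b hb hab hadj
  obtain ⟨i, hi, hin, rfl⟩ := hsurj a
  obtain ⟨j, hj, hjn, rfl⟩ := hsurj b
  wlog hij : i < j generalizing i j
  · exact this j hj hjn hb i hi hin ha (Ne.symm hab) hadj.symm
      (lt_of_le_of_ne (not_lt.1 hij) fun h => hab (h ▸ rfl))
  have hxi := (hneighbours i hi hin ha).2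
  have hyj := (hneighbours j hj hjn hb).1
  have : i + 1 ≠ j := by
    rintro rfl
    rw [hS] at hb
    exact hb.2.2.1 hxi
  exact hham (hP.isHamiltonian_of_chord hcard hi (by omega) hjn hxi.symm hadj hyj)

/-- Let `G` be a 2-tough non-Hamiltonian graph on `n ≥ 3` vertices possessing a
Hamiltonian path `v_1, v_2, …, v_n` with `x = v_1` and `y = v_n` non-adjacent and
`d(x) + d(y) = n - 1`. Let `S` be the set of vertices (other than `x` and `y`)
adjacent to neither `x` nor `y`. Then for every `v_i ∈ S`, both `v_{i-1} y` and
`v_{i+1} x` are edges of `G`, and `S` is an independent set. -/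
theorem stmt_12 {V : Type*} [Fintype V] [DecidableEq V] {n : ℕ} (hn : 3 ≤ n)
    (G : SimpleGraph V) [DecidableRel G.Adj]
    (htough : Tough 2 G) (hham : ¬ G.IsHamiltonian)
    (v : ℕ → V)
    (hinj : ∀ i j, 1 ≤ i → i ≤ n → 1 ≤ j → j ≤ n → v i = v j → i = j)
    (hsurj : ∀ w : V, ∃ i, 1 ≤ i ∧ i ≤ n ∧ v i = w)
    (hpath : ∀ i, 1 ≤ i → i < n → G.Adj (v i) (v (i + 1)))
    (hnadj : ¬ G.Adj (v 1) (v n))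
    (hdeg : G.degree (v 1) + G.degree (v n) = n - 1)
    (S : Set V)
    (hS : S = {w | w ≠ v 1 ∧ w ≠ v n ∧ ¬ G.Adj w (v 1) ∧ ¬ G.Adj w (v n)}) :
    (∀ i, 1 ≤ i → i ≤ n → v i ∈ S →
      G.Adj (v (i - 1)) (v n) ∧ G.Adj (v (i + 1)) (v 1)) ∧
    S.Pairwise (fun a b => ¬ G.Adj a b) :=
  stmt_12_general hn G hham v hinj hsurj hpath hdeg S hS
end

section
/- Let G be a graph on n vertices with vertices ordered x_1, x_2, …, x_n so that the degrees d_i = d(x_i) satisfy d_1 ≤ d_2 ≤ … ≤ d_n, and suppose any two distinct vertices whose degree sum is at least n − 3 are adjacent. Let α < n/2 and suppose that for every index i with d_i < α − 3 we have d_i ≥ i − 2. Then the set U^α of vertices of degree at least n − α is a universal clique, i.e., every vertex of U^α is adjacent to all other vertices of G. -/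
open SimpleGraph

/-- Let `G` be a graph on `n` vertices with vertices ordered `x_1, x_2, …, x_n` so that
the degrees `d_i = d(x_i)` satisfy `d_1 ≤ d_2 ≤ … ≤ d_n`, and suppose any two distinct
vertices whose degree sum is at least `n - 3` are adjacent. Let `α < n/2` and suppose
that for every index `i` with `d_i < α - 3` we have `d_i ≥ i - 2`. Then the set `U^α`
of vertices of degree at least `n - α` is a universal clique, i.e., every vertex of
`U^α` is adjacent to all other vertices of `G`. -/
theorem stmt_18 {V : Type*} [Fintype V] [DecidableEq V] {n : ℕ}
    (G : SimpleGraph V) [DecidableRel G.Adj]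
    (x : ℕ → V)
    (hinj : ∀ i j, 1 ≤ i → i ≤ n → 1 ≤ j → j ≤ n → x i = x j → i = j)
    (hsurj : ∀ w : V, ∃ i, 1 ≤ i ∧ i ≤ n ∧ x i = w)
    (hmono : ∀ i j, 1 ≤ i → i ≤ j → j ≤ n → G.degree (x i) ≤ G.degree (x j))
    (hclose : ∀ u w : V, u ≠ w → n - 3 ≤ G.degree u + G.degree w → G.Adj u w)
    (α : ℕ) (hα : 2 * α < n)
    (hd : ∀ i, 1 ≤ i → i ≤ n → G.degree (x i) < α - 3 → i - 2 ≤ G.degree (x i)) :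
    ∀ u : V, n - α ≤ G.degree u → ∀ w : V, w ≠ u → G.Adj u w := by
  classical
  intro u hu w hw
  by_contra hadj
  -- card of V is n
  have hcard : (Finset.univ : Finset V).card = n := by
    have himg : (Finset.Icc 1 n).image x = Finset.univ := by
      apply Finset.eq_univ_of_forall
      intro v
      obtain ⟨i, h1, h2, h3⟩ := hsurj v
      exact Finset.mem_image.mpr ⟨i, Finset.mem_Icc.mpr ⟨h1, h2⟩, h3⟩
    have hinj' : Set.InjOn x (Finset.Icc 1 n) := by
      intro a ha b hb hab
      simp only [Finset.coe_Icc, Set.mem_Icc] at ha hb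
      exact hinj a b ha.1 ha.2 hb.1 hb.2 hab
    rw [← himg, Finset.card_image_of_injOn hinj', Nat.card_Icc]; omega
  -- the set of non-neighbors of u (other than u)
  set S : Finset V := Finset.univ \ insert u (G.neighborFinset u) with hS
  have hmemS : ∀ v, v ∈ S ↔ v ≠ u ∧ ¬ G.Adj u v := by
    intro v
    simp [hS, SimpleGraph.mem_neighborFinset]
  have hwS : w ∈ S := (hmemS w).mpr ⟨hw, hadj⟩
  -- every vertex in S has degree < α - 3
  have hsmall : ∀ v ∈ S, G.degree v < α - 3 := by
    intro v hv
    obtain ⟨hne, hna⟩ := (hmemS v).mp hv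
    have h1 : ¬ (n - 3 ≤ G.degree u + G.degree v) := fun h =>
      hna (hclose u v (fun h' => hne h'.symm) h)
    push_neg at h1
    omega
  -- pick the vertex of S of maximal degree
  obtain ⟨w', hw'S, hmax⟩ := S.exists_max_image (fun v => G.degree v) ⟨w, hwS⟩
  set k := G.degree w' with hk
  -- every vertex of S has index at most k + 2
  have hcardS : S.card ≤ k + 2 := by
    have := Finset.card_le_card_of_injOn (f := fun v => (hsurj v).choose)
      (s := S) (t := Finset.Icc 1 (k + 2)) ?_ ?_
    · simpa using this
    · intro v hv
      show (hsurj v).choose ∈ Finset.Icc 1 (k + 2)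
      obtain ⟨h1, h2, h3⟩ := (hsurj v).choose_spec
      have hdeg : G.degree (x (hsurj v).choose) < α - 3 := by
        rw [h3]; exact hsmall v hv
      have := hd _ h1 h2 hdeg
      rw [h3] at this
      have hvk : G.degree v ≤ k := hmax v hv
      exact Finset.mem_Icc.mpr ⟨h1, by omega⟩
    · intro a ha b hb hab
      have hab' : (hsurj a).choose = (hsurj b).choose := hab
      obtain ⟨ha1, ha2, ha3⟩ := (hsurj a).choose_spec
      obtain ⟨hb1, hb2, hb3⟩ := (hsurj b).choose_spec
      rw [← ha3, ← hb3, hab']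
  -- count: S.card = n - 1 - deg u
  have hins : (insert u (G.neighborFinset u)).card = G.degree u + 1 := by
    rw [Finset.card_insert_of_notMem (by simp), G.card_neighborFinset_eq_degree]
  have hsub : insert u (G.neighborFinset u) ⊆ Finset.univ := Finset.subset_univ _
  have hScard : S.card = n - (G.degree u + 1) := by
    rw [hS, Finset.card_sdiff_of_subset hsub, hcard, hins]
  have hle : G.degree u + 1 ≤ n := by
    rw [← hcard, ← hins]; exact Finset.card_le_card hsub
  -- conclude
  have hbig : n - 3 ≤ G.degree u + k := by omega
  obtain ⟨hne', hna'⟩ := (hmemS w').mp hw'S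
  exact hna' (hclose u w' (fun h => hne' h.symm) hbig)
end
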